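/- If p is continuous and 2π-periodic on ℝ (restricted to [0,∞)), then for every r > 0 the play output satisfies 𝔭_r[p](t + 2π) = 𝔭_r[p](t) for all t ≥ 2π; i.e., the play operator response becomes periodic after one period. -/

import Mathlib

open MeasureTheory Set

/-- `IsPlayLoc r p ξ ξ'` : `ξ` (locally `W^{1,1}` on `[0,∞)`, with a.e. derivative `ξ'`)
solves the play variational inequality with input `p` and memory parameter `r` on `[0,∞)`. -/
def IsPlayLoc (r : ℝ) (p ξ ξ' : ℝ → ℝ) : Prop :=
  (∀ T > (0:ℝ), IntervalIntegrable ξ' volume 0 T) ∧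
  (∀ t ∈ Set.Ici (0:ℝ), ξ t = ξ 0 + ∫ s in (0:ℝ)..t, ξ' s) ∧
  (∀ t ∈ Set.Ici (0:ℝ), |p t - ξ t| ≤ r) ∧
  (∀ᵐ t ∂(volume.restrict (Set.Ici (0:ℝ))),
      ∀ z ∈ Set.Icc (-r) r, 0 ≤ ξ' t * (p t - ξ t - z)) ∧
  p 0 - ξ 0 = max (-r) (min (p 0) r)

/-!
For an absolutely continuous `T`-periodic input `q`, the play output `ξ` cannot rise over a period
at a time `τ ≥ T`. Otherwise take the last `u ∈ [0, τ]` with `ξ (u + T) ≤ ξ u`. On `(u, τ]` the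
output rises over a period, which by periodicity of `q` keeps `q - ξ` off the lower edge `-r` of the
band and `(q - ξ) (· + T)` off the upper edge `r`; the variational inequality then makes `ξ`
nondecreasing there and `ξ (· + T)` nonincreasing, so `ξ (τ + T) ≤ ξ (u + T) ≤ ξ u ≤ ξ τ` (if
there is no such `u`, the same monotonicity on `[0, τ]` and `[T, τ]` gives
`ξ (τ + T) ≤ ξ T ≤ ξ τ`). The symmetry `(q, ξ) ↦ (-q, -ξ)` gives the reverse inequality.

A continuous periodic `p` is approximated uniformly on compact intervals by its Steklov averages,
which are `C¹` and periodic, and the sup-norm Lipschitz bound for the play operator carries the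
periodicity of their outputs over to the output of `p`.
-/

namespace IsPlayLoc

variable {r : ℝ} {q ξ ξ' : ℝ → ℝ}

theorem nonneg (h : IsPlayLoc r q ξ ξ') : 0 ≤ r :=
  (abs_nonneg _).trans (h.2.2.1 0 self_mem_Ici)

theorem neg (h : IsPlayLoc r q ξ ξ') : IsPlayLoc r (-q) (-ξ) (-ξ') := by
  have hr := h.nonneg
  obtain ⟨hint, hrep, hbd, hvi, hinit⟩ := h
  refine ⟨fun T hT => (hint T hT).neg, fun t ht => ?_, fun t ht => ?_, ?_, ?_⟩
  · simp only [Pi.neg_apply, intervalIntegral.integral_neg]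
    linarith [hrep t ht]
  · rw [Pi.neg_apply, Pi.neg_apply, ← abs_neg]
    convert hbd t ht using 2
    ring
  · filter_upwards [hvi] with t ht z hz
    convert ht (-z) ⟨neg_le_neg hz.2, by linarith [hz.1]⟩ using 1
    simp only [Pi.neg_apply]
    ring
  · simp only [Pi.neg_apply]
    grind

theorem intervalIntegrable (h : IsPlayLoc r q ξ ξ') {a b : ℝ} (ha : 0 ≤ a) (hb : 0 ≤ b) :
    IntervalIntegrable ξ' volume a b := by
  have from_zero : ∀ c, 0 ≤ c → IntervalIntegrable ξ' volume 0 c := fun c hc => by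
    rcases hc.eq_or_lt with rfl | hc
    · exact .refl
    · exact h.1 c hc
  exact (from_zero a ha).symm.trans (from_zero b hb)

theorem sub_eq_integral (h : IsPlayLoc r q ξ ξ') {a b : ℝ} (ha : 0 ≤ a) (hb : 0 ≤ b) :
    ξ b - ξ a = ∫ s in a..b, ξ' s := by
  rw [h.2.1 b hb, h.2.1 a ha, add_sub_add_left_eq_sub,
    intervalIntegral.integral_interval_sub_left (h.intervalIntegrable le_rfl hb)
      (h.intervalIntegrable le_rfl ha)]

theorem continuousOn_Icc (h : IsPlayLoc r q ξ ξ') {b : ℝ} (hb : 0 ≤ b) :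
    ContinuousOn ξ (Icc 0 b) := by
  have hint : IntegrableOn ξ' (uIcc 0 b) := by
    rw [uIcc_of_le hb, integrableOn_Icc_iff_integrableOn_Ioc, ← uIoc_of_le hb,
      ← intervalIntegrable_iff]
    exact h.intervalIntegrable le_rfl hb
  rw [← uIcc_of_le hb]
  refine (continuousOn_const.add (intervalIntegral.continuousOn_primitive_interval hint)).congr
    fun t ht => h.2.1 t ?_
  rw [uIcc_of_le hb] at ht
  exact ht.1

theorem le_of_forall_neg_lt_sub (h : IsPlayLoc r q ξ ξ') {a b : ℝ} (ha : 0 ≤ a) (hab : a ≤ b)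
    (hgap : ∀ s ∈ Ioc a b, -r < q s - ξ s) : ξ a ≤ ξ b := by
  have hderiv : ∀ᵐ s ∂volume.restrict (Ioc a b), 0 ≤ ξ' s := by
    have hsub : Ioc a b ⊆ Ici 0 := fun s hs => ha.trans hs.1.le
    filter_upwards [ae_restrict_of_ae_restrict_of_subset hsub h.2.2.2.1,
      ae_restrict_mem measurableSet_Ioc] with s hvi hs
    refine nonneg_of_mul_nonneg_left ?_ (by linarith [hgap s hs] : 0 < q s - ξ s - -r)
    exact hvi (-r) ⟨le_rfl, by linarith [h.nonneg]⟩
  have hincr := h.sub_eq_integral ha (ha.trans hab)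
  rw [intervalIntegral.integral_of_le hab] at hincr
  linarith [setIntegral_nonneg_of_ae_restrict hderiv]

theorem le_of_forall_sub_lt (h : IsPlayLoc r q ξ ξ') {a b : ℝ} (ha : 0 ≤ a) (hab : a ≤ b)
    (hgap : ∀ s ∈ Ioc a b, q s - ξ s < r) : ξ b ≤ ξ a := by
  have := h.neg.le_of_forall_neg_lt_sub ha hab fun s hs => by
    simp only [Pi.neg_apply]
    linarith [hgap s hs]
  simpa using this

end IsPlayLoc

theorem forall_lt_or_exists_last_le {f g : ℝ → ℝ} {a b : ℝ} (hf : ContinuousOn f (Icc a b))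
    (hg : ContinuousOn g (Icc a b)) :
    (∀ s ∈ Icc a b, f s < g s) ∨ ∃ u ∈ Icc a b, g u ≤ f u ∧ ∀ s ∈ Ioc u b, f s < g s := by
  by_cases hne : (∀ s ∈ Icc a b, f s < g s)
  · exact .inl hne
  right
  push Not at hne
  set Z := {s | s ∈ Icc a b ∧ g s ≤ f s}
  have hZ : IsCompact Z :=
    isCompact_Icc.of_isClosed_subset (isClosed_Icc.isClosed_le hg hf) fun _ hs => hs.1
  have hu : sSup Z ∈ Z := hZ.sSup_mem hne
  refine ⟨sSup Z, hu.1, hu.2, fun s hs => ?_⟩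
  by_contra! hle
  exact hs.1.not_ge (le_csSup hZ.bddAbove ⟨⟨hu.1.1.trans hs.1.le, hs.2⟩, hle⟩)

namespace IsPlayLoc

variable {r T : ℝ} {q ξ ξ' : ℝ → ℝ}

theorem le_and_le_of_forall_lt_add (h : IsPlayLoc r q ξ ξ') (hq : ∀ t ∈ Ici (0:ℝ), q (t + T) = q t)
    (hT : 0 ≤ T) {u τ : ℝ} (hu : 0 ≤ u) (huτ : u ≤ τ) (hrise : ∀ s ∈ Ioc u τ, ξ s < ξ (s + T)) :
    ξ u ≤ ξ τ ∧ ξ (τ + T) ≤ ξ (u + T) := by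
  have hband : ∀ s ∈ Ioc u τ, -r < q s - ξ s ∧ q (s + T) - ξ (s + T) < r := fun s hs => by
    have hs0 : 0 ≤ s := hu.trans hs.1.le
    have hbd := abs_le.mp (h.2.2.1 (s + T) (add_nonneg hs0 hT))
    have hbd' := abs_le.mp (h.2.2.1 s hs0)
    rw [hq s hs0] at hbd ⊢
    constructor <;> linarith [hrise s hs]
  refine ⟨h.le_of_forall_neg_lt_sub hu huτ fun s hs => (hband s hs).1,
    h.le_of_forall_sub_lt (add_nonneg hu hT) (by linarith) fun s hs => ?_⟩
  simpa using (hband (s - T) ⟨by linarith [hs.1], by linarith [hs.2]⟩).2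

theorem apply_add_le (h : IsPlayLoc r q ξ ξ') (hq : ∀ t ∈ Ici (0:ℝ), q (t + T) = q t)
    (hT : 0 ≤ T) {τ : ℝ} (hτ : T ≤ τ) : ξ (τ + T) ≤ ξ τ := by
  by_contra! hlt
  have hτ0 : 0 ≤ τ := hT.trans hτ
  have hshift : ContinuousOn (fun s => ξ (s + T)) (Icc 0 τ) :=
    (h.continuousOn_Icc (add_nonneg hτ0 hT)).comp (continuousOn_id.add continuousOn_const)
      fun s hs => ⟨add_nonneg hs.1 hT, add_le_add_left hs.2 T⟩
  rcases forall_lt_or_exists_last_le (h.continuousOn_Icc hτ0) hshift with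
    hrise | ⟨u, hu, hdrop, hrise⟩
  · have h₁ := h.le_and_le_of_forall_lt_add hq hT hT hτ fun s hs =>
      hrise s ⟨hT.trans hs.1.le, hs.2⟩
    have h₂ := h.le_and_le_of_forall_lt_add hq hT le_rfl hτ0 fun s hs =>
      hrise s ⟨hs.1.le, hs.2⟩
    rw [zero_add] at h₂
    linarith [h₁.1, h₂.2]
  · have := h.le_and_le_of_forall_lt_add hq hT hu.1 hu.2 hrise
    linarith [this.1, this.2]

theorem apply_add_eq (h : IsPlayLoc r q ξ ξ') (hq : ∀ t ∈ Ici (0:ℝ), q (t + T) = q t)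
    (hT : 0 ≤ T) {τ : ℝ} (hτ : T ≤ τ) : ξ (τ + T) = ξ τ := by
  refine le_antisymm (h.apply_add_le hq hT hτ) ?_
  simpa using h.neg.apply_add_le (fun t ht => by simp [hq t ht]) hT hτ

end IsPlayLoc

noncomputable def steklov (h : ℝ) (p : ℝ → ℝ) (t : ℝ) : ℝ :=
  (∫ s in t..t + h, p s) / h

section Steklov

variable {p : ℝ → ℝ}

theorem steklov_eq_add_integral (hp : Continuous p) (h t : ℝ) :
    steklov h p t = steklov h p 0 + ∫ s in (0:ℝ)..t, (p (s + h) - p s) / h := by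
  have hi : ∀ a b, IntervalIntegrable p volume a b := hp.intervalIntegrable
  have hsplit : ∫ s in t..t + h, p s =
      (∫ s in (0:ℝ)..h, p s) + ∫ s in (0:ℝ)..t, (p (s + h) - p s) := by
    have hshift : IntervalIntegrable (fun s => p (s + h)) volume 0 t :=
      (hp.comp (continuous_add_const h)).intervalIntegrable _ _
    rw [intervalIntegral.integral_sub hshift (hi 0 t), intervalIntegral.integral_comp_add_right,
      zero_add]
    linarith [intervalIntegral.integral_add_adjacent_intervals (hi 0 t) (hi t (t + h)),
      intervalIntegral.integral_add_adjacent_intervals (hi 0 h) (hi h (t + h))]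
  rw [steklov, steklov, intervalIntegral.integral_div, hsplit, zero_add, add_div]

theorem continuous_steklov (hp : Continuous p) (h : ℝ) : Continuous (steklov h p) := by
  rw [funext (steklov_eq_add_integral hp h)]
  refine continuous_const.add (intervalIntegral.continuous_primitive (fun a b => ?_) 0)
  exact (((hp.comp (continuous_add_const h)).sub hp).div_const h).intervalIntegrable a b

theorem steklov_add_of_periodicOn {h T : ℝ} (hp : ∀ t ∈ Ici (0:ℝ), p (t + T) = p t) (hh : 0 ≤ h)
    {t : ℝ} (ht : 0 ≤ t) : steklov h p (t + T) = steklov h p t := by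
  rw [steklov, steklov, add_right_comm, ← intervalIntegral.integral_comp_add_right]
  congr 1
  refine intervalIntegral.integral_congr fun s hs => hp s ?_
  rw [uIcc_of_le (by linarith)] at hs
  exact ht.trans hs.1

theorem abs_steklov_sub_le (hp : Continuous p) {h t ε : ℝ} (hh : 0 < h)
    (hε : ∀ s ∈ Icc t (t + h), |p s - p t| ≤ ε) : |steklov h p t - p t| ≤ ε := by
  have hmean : steklov h p t - p t = (∫ s in t..t + h, (p s - p t)) / h := by
    rw [intervalIntegral.integral_sub (hp.intervalIntegrable _ _) intervalIntegrable_const,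
      intervalIntegral.integral_const, steklov, smul_eq_mul, add_sub_cancel_left]
    field_simp
  have hint := intervalIntegral.norm_integral_le_of_norm_le_const (a := t) (b := t + h)
    (C := ε) (f := fun s => p s - p t) fun s hs => by
      rw [uIoc_of_le (by linarith)] at hs
      exact hε s (Ioc_subset_Icc_self hs)
  rw [hmean, abs_div, abs_of_pos hh, div_le_iff₀ hh]
  simpa [abs_of_pos hh] using hint

theorem exists_abs_steklov_sub_le (hp : Continuous p) (b : ℝ) {ε : ℝ} (hε : 0 < ε) :
    ∃ h > 0, ∀ t ∈ Icc 0 b, |steklov h p t - p t| ≤ ε := by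
  obtain ⟨δ, hδ, hclose⟩ := Metric.uniformContinuousOn_iff_le.mp
    (isCompact_Icc.uniformContinuousOn_of_continuous (s := Icc 0 (b + 1)) hp.continuousOn) ε hε
  refine ⟨min δ 1, lt_min hδ one_pos, fun t ht => abs_steklov_sub_le hp (lt_min hδ one_pos)
    fun s hs => ?_⟩
  refine hclose s ⟨ht.1.trans hs.1, by linarith [hs.2, ht.2, min_le_right δ 1]⟩
    t ⟨ht.1, by linarith [ht.2]⟩ ?_
  rw [Real.dist_eq, abs_of_nonneg (by linarith [hs.1])]
  linarith [hs.2, min_le_left δ 1]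

end Steklov

theorem play_periodic_general (r : ℝ)
    (Play : ℝ → (ℝ → ℝ) → (ℝ → ℝ))
    -- `Play` agrees with the solution of the variational inequality on `W^{1,1}` inputs:
    (hPlaySol : ∀ q q' : ℝ → ℝ, (∀ T > (0:ℝ), IntervalIntegrable q' volume 0 T) →
        (∀ t ∈ Set.Ici (0:ℝ), q t = q 0 + ∫ s in (0:ℝ)..t, q' s) →
        ∃ ξ' : ℝ → ℝ, IsPlayLoc r q (Play r q) ξ')
    -- `Play` is the Lipschitz (sup-norm) extension to continuous inputs:
    (hPlayLip : ∀ q₁ q₂ : ℝ → ℝ, Continuous q₁ → Continuous q₂ →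
        ∀ t ∈ Set.Ici (0:ℝ),
          |Play r q₁ t - Play r q₂ t| ≤ sSup ((fun τ => |q₁ τ - q₂ τ|) '' Set.Icc 0 t))
    (p : ℝ → ℝ) (hpc : Continuous p)
    (hper : ∀ t ∈ Set.Ici (0:ℝ), p (t + 2 * Real.pi) = p t) :
    ∀ t ∈ Set.Ici (2 * Real.pi), Play r p (t + 2 * Real.pi) = Play r p t := by
  intro t ht
  have hT : 0 ≤ 2 * Real.pi := by positivity
  have ht₀ : 0 ≤ t := hT.trans ht
  refine eq_of_forall_dist_le fun ε hε => ?_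
  obtain ⟨h, hh, hclose⟩ := exists_abs_steklov_sub_le hpc (t + 2 * Real.pi) (half_pos hε)
  obtain ⟨ξ', hξ⟩ := hPlaySol (steklov h p) (fun s => (p (s + h) - p s) / h)
    (fun _ _ => (((hpc.comp (continuous_add_const h)).sub hpc).div_const h).intervalIntegrable _ _)
    (fun s _ => steklov_eq_add_integral hpc h s)
  have hperiodic : Play r (steklov h p) (t + 2 * Real.pi) = Play r (steklov h p) t :=
    hξ.apply_add_eq (fun s hs => steklov_add_of_periodicOn hper hh.le hs) hT ht
  have happrox : ∀ s ∈ Icc 0 (t + 2 * Real.pi), |Play r p s - Play r (steklov h p) s| ≤ ε / 2 :=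
    fun s hs => (hPlayLip p _ hpc (continuous_steklov hpc h) s hs.1).trans <|
      Real.sSup_le (by
        rintro _ ⟨τ, hτ, rfl⟩
        exact (abs_sub_comm _ _).le.trans (hclose τ ⟨hτ.1, hτ.2.trans hs.2⟩)) (half_pos hε).le
  rw [Real.dist_eq]
  calc |Play r p (t + 2 * Real.pi) - Play r p t|
      ≤ |Play r p (t + 2 * Real.pi) - Play r (steklov h p) (t + 2 * Real.pi)|
        + |Play r p t - Play r (steklov h p) t| := by
        rw [hperiodic, abs_sub_comm (Play r p t)]
        exact abs_sub_le _ _ _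
    _ ≤ ε / 2 + ε / 2 :=
      add_le_add (happrox _ ⟨add_nonneg ht₀ hT, le_rfl⟩) (happrox t ⟨ht₀, by linarith⟩)
    _ = ε := add_halves ε

/-- If `p` is continuous and `2π`-periodic on `[0,∞)`, then for every `r > 0` the play
output (the Lipschitz extension of the play operator to continuous inputs) satisfies
`𝔭_r[p](t + 2π) = 𝔭_r[p](t)` for all `t ≥ 2π`. -/
theorem play_periodic (r : ℝ) (hr : 0 < r)
    (Play : ℝ → (ℝ → ℝ) → (ℝ → ℝ))
    -- `Play` agrees with the solution of the variational inequality on `W^{1,1}` inputs: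
    (hPlaySol : ∀ q q' : ℝ → ℝ, (∀ T > (0:ℝ), IntervalIntegrable q' volume 0 T) →
        (∀ t ∈ Set.Ici (0:ℝ), q t = q 0 + ∫ s in (0:ℝ)..t, q' s) →
        ∃ ξ' : ℝ → ℝ, IsPlayLoc r q (Play r q) ξ')
    -- `Play` is the Lipschitz (sup-norm) extension to continuous inputs:
    (hPlayLip : ∀ q₁ q₂ : ℝ → ℝ, Continuous q₁ → Continuous q₂ →
        ∀ t ∈ Set.Ici (0:ℝ),
          |Play r q₁ t - Play r q₂ t| ≤ sSup ((fun τ => |q₁ τ - q₂ τ|) '' Set.Icc 0 t))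
    (p : ℝ → ℝ) (hpc : Continuous p)
    (hper : ∀ t ∈ Set.Ici (0:ℝ), p (t + 2 * Real.pi) = p t) :
    ∀ t ∈ Set.Ici (2 * Real.pi), Play r p (t + 2 * Real.pi) = Play r p t :=
  play_periodic_general r Play hPlaySol hPlayLip p hpc hper
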